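/- arXiv:1706.00219 — 3 statements merged into one kernel-verified Lean document; each statement's English description precedes it below -/
import Mathlib

section
/- (Monotonicity Lemma.) Let x and y be prices with 0 ≤ x < y ≤ v_1, let br_x ∈ BR(x) and br_y ∈ BR(y). Then y + br_y ≥ x + br_x. -/
open scoped Classical

/-- The demand function induced by an instance with `n` demand levels,
values `v` and demands `d` (indices `1,…,n`):
`demand n v d x = d i` for the largest index `i ∈ {1,…,n}` with `x ≤ v i`,
and `0` if there is no such index. -/
noncomputable def demand (n : ℕ) (v d : ℕ → ℝ) (x : ℝ) : ℝ :=
  if h : ((Finset.Icc 1 n).filter (fun i => x ≤ v i)).Nonempty then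
    d (((Finset.Icc 1 n).filter (fun i => x ≤ v i)).max' h)
  else 0

/-- Total revenue at total price `x`. -/
noncomputable def rev (n : ℕ) (v d : ℕ → ℝ) (x : ℝ) : ℝ := x * demand n v d x

/-- Social welfare at total price `x` (with the convention `d 0 = 0`). -/
noncomputable def welfare (n : ℕ) (v d : ℕ → ℝ) (x : ℝ) : ℝ :=
  ∑ i ∈ (Finset.Icc 1 n).filter (fun i => x ≤ v i),
    v i * (d i - if 1 < i then d (i - 1) else 0)

/-- `InBR n v d q p` : `p` is a best response to the price `q` of the other seller. -/
def InBR (n : ℕ) (v d : ℕ → ℝ) (q p : ℝ) : Prop :=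
  0 ≤ p ∧ ∀ p', 0 ≤ p' → p' * demand n v d (p' + q) ≤ p * demand n v d (p + q)

/-- `(p, q)` is a pure Nash equilibrium. -/
def IsNE (n : ℕ) (v d : ℕ → ℝ) (p q : ℝ) : Prop :=
  0 ≤ p ∧ 0 ≤ q ∧ InBR n v d q p ∧ InBR n v d p q

/-- A valid instance with `n ≥ 2` demand levels: positive values strictly
decreasing in the index, positive demands strictly increasing in the index. -/
def ValidInstance (n : ℕ) (v d : ℕ → ℝ) : Prop :=
  2 ≤ n ∧ 0 < v n ∧ (∀ i j, 1 ≤ i → i < j → j ≤ n → v j < v i) ∧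
    0 < d 1 ∧ (∀ i j, 1 ≤ i → i < j → j ≤ n → d i < d j)

/-!
If `x < y` but `y + q < x + p` for best responses `p` to `x` and `q` to `y`, each seller could
copy the other's total price: the seller facing `y` by charging `x + p - y`, the one facing `x`
by charging `y + q - x`. Adding the two best-response inequalities gives
`(y - x) (D(y + q) - D(x + p)) ≤ 0`, so the two demands agree, as `D` is antitone; then the
first inequality alone forces `x + p ≤ y + q`, provided that demand is positive, which holds
because charging `v₁ - x` already yields positive revenue.
-/

section BestResponse

variable {D : ℝ → ℝ} {x z p : ℝ}

lemma demand_pos_of_bestResponse (hp : 0 ≤ p ∧ ∀ p', 0 ≤ p' → p' * D (p' + x) ≤ p * D (p + x))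
    (hxz : x < z) (hDz : 0 < D z) : 0 < D (p + x) := by
  have hdev := hp.2 (z - x) (sub_nonneg.2 hxz.le)
  rw [sub_add_cancel] at hdev
  have hrev : 0 < p * D (p + x) := (mul_pos (sub_pos.2 hxz) hDz).trans_le hdev
  exact pos_of_mul_pos_right hrev hp.1

theorem add_le_add_of_bestResponse (hD : Antitone D) {y q : ℝ} (hxy : x < y) (hxz : x < z)
    (hDz : 0 < D z)
    (hp : 0 ≤ p ∧ ∀ p', 0 ≤ p' → p' * D (p' + x) ≤ p * D (p + x))
    (hq : 0 ≤ q ∧ ∀ q', 0 ≤ q' → q' * D (q' + y) ≤ q * D (q + y)) :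
    x + p ≤ y + q := by
  by_contra! hlt
  have hA : 0 < D (p + x) := demand_pos_of_bestResponse hp hxz hDz
  have hAB : D (p + x) ≤ D (q + y) := hD (by linarith)
  have h₁ := hq.2 (p + x - y) (by linarith [hq.1])
  have h₂ := hp.2 (q + y - x) (by linarith [hq.1])
  rw [sub_add_cancel] at h₁ h₂
  have hsum : (y - x) * (D (q + y) - D (p + x)) ≤ 0 := by linear_combination h₁ + h₂
  have hBA : D (q + y) ≤ D (p + x) :=
    sub_nonpos.1 (nonpos_of_mul_nonpos_right hsum (sub_pos.2 hxy))
  rw [← le_antisymm hAB hBA] at h₁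
  linarith [le_of_mul_le_mul_right h₁ hA]

end BestResponse

section Demand

variable {n : ℕ} {v d : ℕ → ℝ}

lemma demand_nonneg (hd : ∀ i ∈ Finset.Icc 1 n, 0 ≤ d i) (z : ℝ) : 0 ≤ demand n v d z := by
  unfold demand
  split_ifs with hne
  · exact hd _ (Finset.mem_filter.1 (Finset.max'_mem _ hne)).1
  · exact le_rfl

lemma demand_pos_of_le (hn : 1 ≤ n) (hd : ∀ i ∈ Finset.Icc 1 n, 0 < d i) {z : ℝ}
    (hz : z ≤ v 1) : 0 < demand n v d z := by
  have hne : ((Finset.Icc 1 n).filter (fun i => z ≤ v i)).Nonempty :=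
    ⟨1, Finset.mem_filter.2 ⟨Finset.mem_Icc.2 ⟨le_rfl, hn⟩, hz⟩⟩
  rw [demand, dif_pos hne]
  exact hd _ (Finset.mem_filter.1 (Finset.max'_mem _ hne)).1

lemma demand_antitone (hd₀ : ∀ i ∈ Finset.Icc 1 n, 0 ≤ d i)
    (hd : MonotoneOn d (Set.Icc 1 n)) : Antitone (demand n v d) := by
  intro z z' hzz'
  by_cases hne' : ((Finset.Icc 1 n).filter (fun i => z' ≤ v i)).Nonempty
  · have hsub : (Finset.Icc 1 n).filter (fun i => z' ≤ v i) ⊆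
        (Finset.Icc 1 n).filter (fun i => z ≤ v i) :=
      Finset.monotone_filter_right _ fun _ _ hi => hzz'.trans hi
    have hne := hne'.mono hsub
    rw [demand, demand, dif_pos hne', dif_pos hne]
    have hmem' := (Finset.mem_filter.1 (Finset.max'_mem _ hne')).1
    have hmem := (Finset.mem_filter.1 (Finset.max'_mem _ hne)).1
    exact hd (by simpa using hmem') (by simpa using hmem) (Finset.max'_subset hne' hsub)
  · rw [demand, dif_neg hne']
    exact demand_nonneg hd₀ z

end Demand

namespace ValidInstance

variable {n : ℕ} {v d : ℕ → ℝ}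

lemma d_pos (h : ValidInstance n v d) : ∀ i ∈ Finset.Icc 1 n, 0 < d i := by
  intro i hi
  obtain ⟨hi₁, hin⟩ := Finset.mem_Icc.1 hi
  rcases hi₁.eq_or_lt with rfl | hlt
  · exact h.2.2.2.1
  · exact h.2.2.2.1.trans (h.2.2.2.2 1 i le_rfl hlt hin)

lemma d_monotoneOn (h : ValidInstance n v d) : MonotoneOn d (Set.Icc 1 n) := by
  intro i hi j hj hij
  rcases hij.eq_or_lt with rfl | hlt
  · exact le_rfl
  · exact (h.2.2.2.2 i j hi.1 hlt hj.2).le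

end ValidInstance

theorem stmt_5_general (n : ℕ) (v d : ℕ → ℝ) (h : ValidInstance n v d)
    (x y brx bry : ℝ) (hxy : x < y) (hy : y ≤ v 1)
    (hbrx : InBR n v d x brx) (hbry : InBR n v d y bry) :
    x + brx ≤ y + bry := by
  have hD : Antitone (demand n v d) :=
    demand_antitone (fun i hi => (h.d_pos i hi).le) h.d_monotoneOn
  have hDv : 0 < demand n v d (v 1) := demand_pos_of_le (by linarith [h.1]) h.d_pos le_rfl
  exact add_le_add_of_bestResponse hD hxy (hxy.trans_le hy) hDv hbrx hbry

/-- Monotonicity Lemma: the total price after a best response is monotone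
non-decreasing in the price being responded to. -/
theorem stmt_5 (n : ℕ) (v d : ℕ → ℝ) (h : ValidInstance n v d)
    (x y brx bry : ℝ) (hx : 0 ≤ x) (hxy : x < y) (hy : y ≤ v 1)
    (hbrx : InBR n v d x brx) (hbry : InBR n v d y bry) :
    x + brx ≤ y + bry :=
  stmt_5_general n v d h x y brx bry hxy hy hbrx hbry
end

section
/- Fix an integer n ≥ 2. There exists ε_0 > 0 such that for every ε ∈ (0, ε_0), in the instance with n demand levels given by v_i = ε^{i−1} and d_i = ((2−ε)/ε)^{i−1} (for i = 1, …, n), the following holds for every j ∈ {1, …, n−1}: if x is a price with v_{j+1} < x < v_j/2, then the unique best response to x is v_j − x, i.e. BR(x) = {v_j − x}. -/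
open scoped Classical

/-!
When the other seller's price `x` lies in `(v (j+1), v j)`, a price `p` with `p + x ≤ v i`
earns at most `(v i - x) d i` and only levels `i ≤ j` are reachable; so `v j - x` is the unique
best response as soon as level `j` strictly beats every lower level. In this instance
`v i * d i = (2-ε)^(i-1)`, and with `x < ε^(j-1)/2` the comparison of levels `i < j` reduces to
`2 ≤ (2-ε)^m + ε^m` for `m = j - i`, the power-mean inequality for two numbers summing to `2`.
-/

lemma demand_eq_zero_or_exists (n : ℕ) (v d : ℕ → ℝ) (t : ℝ) :
    demand n v d t = 0 ∨ ∃ i ∈ Finset.Icc 1 n, t ≤ v i ∧ demand n v d t = d i := by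
  by_cases hne : ((Finset.Icc 1 n).filter (fun k => t ≤ v k)).Nonempty
  · obtain ⟨hi, ht⟩ := Finset.mem_filter.1 (Finset.max'_mem _ hne)
    exact Or.inr ⟨_, hi, ht, by rw [demand, dif_pos hne]⟩
  · exact Or.inl (by rw [demand, dif_neg hne])

section Demand

variable {n : ℕ} {v d : ℕ → ℝ}

lemma demand_eq_of_forall_le {i : ℕ} {t : ℝ} (hi : i ∈ Finset.Icc 1 n) (ht : t ≤ v i)
    (hmax : ∀ k ∈ Finset.Icc 1 n, t ≤ v k → k ≤ i) :
    demand n v d t = d i := by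
  have hmem : i ∈ (Finset.Icc 1 n).filter (fun k => t ≤ v k) := Finset.mem_filter.2 ⟨hi, ht⟩
  have hne : ((Finset.Icc 1 n).filter (fun k => t ≤ v k)).Nonempty := ⟨i, hmem⟩
  rw [demand, dif_pos hne]
  congr 1
  refine le_antisymm (Finset.max'_le _ hne _ fun k hk => ?_) (Finset.le_max' _ _ hmem)
  exact hmax k (Finset.mem_filter.1 hk).1 (Finset.mem_filter.1 hk).2

lemma inBR_iff_eq_of_forall_lt {q p₀ : ℝ} (hp₀ : 0 ≤ p₀)
    (hlt : ∀ p, 0 ≤ p → p ≠ p₀ →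
      p * demand n v d (p + q) < p₀ * demand n v d (p₀ + q))
    (p : ℝ) : InBR n v d q p ↔ p = p₀ := by
  constructor
  · rintro ⟨hp, hbest⟩
    by_contra hne
    exact (hbest p₀ hp₀).not_gt (hlt p hp hne)
  · rintro rfl
    refine ⟨hp₀, fun p' hp' => ?_⟩
    rcases eq_or_ne p' p with rfl | hne
    · exact le_rfl
    · exact (hlt p' hp' hne).le

theorem inBR_iff_eq_sub_of_dominant (hv : AntitoneOn v (Set.Icc 1 n))
    (hd : ∀ i ∈ Finset.Icc 1 n, 0 < d i) {j : ℕ} (hj : 1 ≤ j) (hjn : j < n) {x : ℝ}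
    (hxj1 : v (j + 1) < x) (hxj : x < v j)
    (hdom : ∀ i ∈ Finset.Ico 1 j, (v i - x) * d i < (v j - x) * d j) (p : ℝ) :
    InBR n v d x p ↔ p = v j - x := by
  have hjmem : j ∈ Finset.Icc 1 n := Finset.mem_Icc.2 ⟨hj, hjn.le⟩
  have le_j_of_le_v : ∀ k ∈ Finset.Icc 1 n, x ≤ v k → k ≤ j := by
    intro k hk hxk
    by_contra! hjk
    have : v k ≤ v (j + 1) :=
      hv (Set.mem_Icc.2 ⟨by omega, by omega⟩) (Set.mem_Icc.2 (Finset.mem_Icc.1 hk)) hjk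
    linarith
  have hdemand_vj : demand n v d (v j - x + x) = d j := by
    rw [sub_add_cancel]
    exact demand_eq_of_forall_le hjmem le_rfl fun k hk hjk => le_j_of_le_v k hk (by linarith)
  refine inBR_iff_eq_of_forall_lt (by linarith) (fun p' hp' hne => ?_) p
  rw [hdemand_vj]
  rcases demand_eq_zero_or_exists n v d (p' + x) with h0 | ⟨i, hi, hvi, hdi⟩
  · rw [h0, mul_zero]
    exact mul_pos (by linarith) (hd j hjmem)
  rw [hdi]
  have hij : i ≤ j := le_j_of_le_v i hi (by linarith)
  obtain hij | rfl := hij.lt_or_eq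
  · calc p' * d i ≤ (v i - x) * d i := by gcongr; exacts [(hd i hi).le, by linarith]
      _ < (v j - x) * d j := hdom i (Finset.mem_Ico.2 ⟨(Finset.mem_Icc.1 hi).1, hij⟩)
  · exact mul_lt_mul_of_pos_right (lt_of_le_of_ne (by linarith) hne) (hd i hi)

end Demand

lemma two_le_pow_add_pow {a b : ℝ} (ha : 0 ≤ a) (hb : 0 ≤ b) (hab : a + b = 2) (m : ℕ) :
    2 ≤ a ^ m + b ^ m := by
  cases m with
  | zero => norm_num
  | succ k =>
    have h := add_pow_le ha hb (k + 1)
    rw [hab, Nat.add_sub_cancel, pow_succ] at h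
    exact le_of_mul_le_mul_left h (by positivity)

lemma geometric_revenue_lt {ε x : ℝ} (hε : 0 < ε) (hε1 : ε < 1) (a : ℕ) {m : ℕ}
    (hm : 1 ≤ m) (hx : x < ε ^ (a + m) / 2) :
    (ε ^ a - x) * ((2 - ε) / ε) ^ a < (ε ^ (a + m) - x) * ((2 - ε) / ε) ^ (a + m) := by
  set r := (2 - ε) / ε
  have hεr : ∀ k : ℕ, ε ^ k * r ^ k = (2 - ε) ^ k := fun k => by
    rw [← mul_pow, mul_div_cancel₀ _ hε.ne']
  have hr : 1 < r := by rw [lt_div_iff₀ hε]; linarith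
  have hra : r ^ a < r ^ (a + m) := pow_lt_pow_right₀ hr (by omega)
  have hconv : (2 - ε) ^ a * 2 ≤ (2 - ε) ^ a * ((2 - ε) ^ m + ε ^ m) :=
    mul_le_mul_of_nonneg_left (two_le_pow_add_pow (by linarith) hε.le (by ring) m)
      (pow_nonneg (by linarith) a)
  have hcross : ε ^ (a + m) * r ^ a = ε ^ m * (2 - ε) ^ a := by
    rw [pow_add, mul_comm (ε ^ a), mul_assoc, hεr]
  have key : x * (r ^ (a + m) - r ^ a) < (2 - ε) ^ (a + m) - (2 - ε) ^ a :=
    calc x * (r ^ (a + m) - r ^ a) < ε ^ (a + m) / 2 * (r ^ (a + m) - r ^ a) :=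
          mul_lt_mul_of_pos_right hx (by linarith)
      _ = ((2 - ε) ^ a * (2 - ε) ^ m - ε ^ m * (2 - ε) ^ a) / 2 := by
          linear_combination (hεr (a + m) - hcross) / 2
      _ ≤ (2 - ε) ^ (a + m) - (2 - ε) ^ a := by rw [pow_add]; linarith
  calc (ε ^ a - x) * r ^ a = (2 - ε) ^ a - x * r ^ a := by rw [sub_mul, hεr]
    _ < (2 - ε) ^ (a + m) - x * r ^ (a + m) := by linarith
    _ = (ε ^ (a + m) - x) * r ^ (a + m) := by rw [sub_mul, hεr]

theorem stmt_12_general (n : ℕ) :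
    ∃ ε₀ : ℝ, 0 < ε₀ ∧ ∀ ε : ℝ, 0 < ε → ε < ε₀ →
      ∀ v d : ℕ → ℝ,
        (∀ i ∈ Finset.Icc 1 n, v i = ε ^ (i - 1)) →
        (∀ i ∈ Finset.Icc 1 n, d i = ((2 - ε) / ε) ^ (i - 1)) →
        ∀ j : ℕ, 1 ≤ j → j < n →
          ∀ x : ℝ, v (j + 1) < x → x < v j / 2 →
            ∀ p : ℝ, InBR n v d x p ↔ p = v j - x := by
  refine ⟨1, one_pos, fun ε hε hε1 v d hv hd j hj hjn x hxj1 hxj => ?_⟩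
  have hjmem : j ∈ Finset.Icc 1 n := Finset.mem_Icc.2 ⟨hj, hjn.le⟩
  have hvj : 0 < v j := by rw [hv j hjmem]; positivity
  refine inBR_iff_eq_sub_of_dominant ?_ ?_ hj hjn hxj1 (by linarith) ?_
  · intro i hi k hk hik
    rw [hv i (Finset.mem_Icc.2 hi), hv k (Finset.mem_Icc.2 hk)]
    exact pow_le_pow_of_le_one hε.le hε1.le (by omega)
  · intro i hi
    rw [hd i hi]
    exact pow_pos (div_pos (by linarith) hε) _
  · intro i hi
    obtain ⟨hi1, hij⟩ := Finset.mem_Ico.1 hi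
    have hsplit : j - 1 = (i - 1) + (j - i) := by omega
    rw [hv i (Finset.mem_Icc.2 ⟨hi1, by omega⟩), hd i (Finset.mem_Icc.2 ⟨hi1, by omega⟩),
      hv j hjmem, hd j hjmem, hsplit]
    rw [hv j hjmem, hsplit] at hxj
    exact geometric_revenue_lt hε hε1 _ (by omega) hxj

/-- In the instance `vᵢ = ε^(i-1)`, `dᵢ = ((2-ε)/ε)^(i-1)` with `ε` small
enough: for every `j ∈ {1,…,n-1}` and every price `x` with
`v (j+1) < x < v j / 2`, the unique best response to `x` is `v j - x`. -/
theorem stmt_12 (n : ℕ) (hn : 2 ≤ n) :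
    ∃ ε₀ : ℝ, 0 < ε₀ ∧ ∀ ε : ℝ, 0 < ε → ε < ε₀ →
      ∀ v d : ℕ → ℝ,
        (∀ i ∈ Finset.Icc 1 n, v i = ε ^ (i - 1)) →
        (∀ i ∈ Finset.Icc 1 n, d i = ((2 - ε) / ε) ^ (i - 1)) →
        ∀ j : ℕ, 1 ≤ j → j < n →
          ∀ x : ℝ, v (j + 1) < x → x < v j / 2 →
            ∀ p : ℝ, InBR n v d x p ↔ p = v j - x :=
  stmt_12_general n
end

section
/- Let v* be a total price with 0 < v* ≤ v_1 such that (v*/2, v*/2) is a pure Nash equilibrium. Then the welfare at this equilibrium is at most a logarithmic-in-D multiple of its revenue: SW(v*) ≤ 2·(log₂ D + 1)·R(v*), where D = d_n/d_1. -/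
open scoped Classical

/-!
Let `k` be the highest demand level served at the total price `v*`, so that the revenue is
`R(v*) = v* d_k`. For each level `i ≤ k`, one seller could deviate to the price `v_i - v*/2`
and sell `d_i`; the equilibrium condition turns this into `v_i d_i ≤ v* d_k`. Hence
`SW(v*) = Σ_{i ≤ k} v_i (d_i - d_{i-1}) ≤ R(v*) Σ_{i ≤ k} (d_i - d_{i-1}) / d_i`,
and the last sum is at most `1 + ln (d_k / d_1)` because
`(d_i - d_{i-1}) / d_i ≤ ln (d_i / d_{i-1})`.
-/

open Finset

variable {n k : ℕ} {v d : ℕ → ℝ}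

def demandStep (d : ℕ → ℝ) (i : ℕ) : ℝ := d i - if 1 < i then d (i - 1) else 0

lemma ValidInstance.strictAntiOn_v (h : ValidInstance n v d) : StrictAntiOn v (Set.Icc 1 n) :=
  fun i hi j hj hij => h.2.2.1 i j hi.1 hij hj.2

lemma ValidInstance.monotoneOn_d (h : ValidInstance n v d) : MonotoneOn d (Set.Icc 1 n) :=
  StrictMonoOn.monotoneOn fun i hi j hj hij => h.2.2.2.2 i j hi.1 hij hj.2

lemma filter_le_eq_Icc (hv : AntitoneOn v (Set.Icc 1 n)) {x : ℝ} (hkn : k ≤ n) (hxk : x ≤ v k)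
    (hmax : ∀ j ∈ Icc 1 n, x ≤ v j → j ≤ k) :
    (Icc 1 n).filter (fun i => x ≤ v i) = Icc 1 k := by
  ext j
  simp only [mem_filter, mem_Icc]
  constructor
  · rintro ⟨hj, hxj⟩
    exact ⟨hj.1, hmax j (mem_Icc.2 hj) hxj⟩
  · rintro ⟨hj1, hjk⟩
    exact ⟨⟨hj1, hjk.trans hkn⟩,
      hxk.trans (hv ⟨hj1, hjk.trans hkn⟩ ⟨hj1.trans hjk, hkn⟩ hjk)⟩

lemma exists_filter_le_eq_Icc (hv : AntitoneOn v (Set.Icc 1 n)) (hn : 1 ≤ n) {x : ℝ}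
    (hx : x ≤ v 1) : ∃ k ∈ Icc 1 n, (Icc 1 n).filter (fun i => x ≤ v i) = Icc 1 k := by
  have hne : ((Icc 1 n).filter (fun i => x ≤ v i)).Nonempty := ⟨1, by simp [hn, hx]⟩
  obtain ⟨hk, hxk⟩ := mem_filter.1 (max'_mem _ hne)
  exact ⟨_, hk, filter_le_eq_Icc hv (mem_Icc.1 hk).2 hxk
    fun j hj hxj => le_max' _ j (mem_filter.2 ⟨hj, hxj⟩)⟩

lemma demand_eq_of_filter_eq_Icc {x : ℝ} (hk : 1 ≤ k)
    (hS : (Icc 1 n).filter (fun i => x ≤ v i) = Icc 1 k) : demand n v d x = d k := by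
  have hne : (Icc 1 k).Nonempty := nonempty_Icc.2 hk
  have hmax : (Icc 1 k).max' hne = k :=
    (max'_eq_iff _ _ _).2 ⟨right_mem_Icc.2 hk, fun _ hb => (mem_Icc.1 hb).2⟩
  simp only [demand, hS, dif_pos hne, hmax]

lemma demand_value (hv : StrictAntiOn v (Set.Icc 1 n)) {i : ℕ} (hi : i ∈ Icc 1 n) :
    demand n v d (v i) = d i :=
  demand_eq_of_filter_eq_Icc (mem_Icc.1 hi).1 <|
    filter_le_eq_Icc hv.antitoneOn (mem_Icc.1 hi).2 le_rfl fun _ hj hij =>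
      (hv.le_iff_ge (Set.mem_Icc.2 (mem_Icc.1 hi)) (Set.mem_Icc.2 (mem_Icc.1 hj))).1 hij

lemma welfare_eq_sum_demandStep {x : ℝ}
    (hS : (Icc 1 n).filter (fun i => x ≤ v i) = Icc 1 k) :
    welfare n v d x = ∑ i ∈ Icc 1 k, v i * demandStep d i := by
  rw [welfare, hS]
  rfl

lemma InBR.sub_mul_demand_le {p q y : ℝ} (hp : InBR n v d q p) (hy : q ≤ y) :
    (y - q) * demand n v d y ≤ p * demand n v d (p + q) := by
  simpa using hp.2 (y - q) (sub_nonneg.2 hy)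

lemma InBR.value_mul_le_of_half {x : ℝ} {i : ℕ} (hBR : InBR n v d (x / 2) (x / 2))
    (hx : demand n v d x = d k) (hi : demand n v d (v i) = d i) (hxi : x ≤ v i)
    (hik : d i ≤ d k) : v i * d i ≤ x * d k := by
  have hdev := hBR.sub_mul_demand_le (y := v i) (by linarith [hBR.1])
  rw [add_halves, hx, hi] at hdev
  nlinarith [mul_le_mul_of_nonneg_left hik hBR.1]

lemma MonotoneOn.pos_of_mem_Icc (hd : MonotoneOn d (Set.Icc 1 k)) (hd1 : 0 < d 1) {i : ℕ}
    (hi1 : 1 ≤ i) (hik : i ≤ k) : 0 < d i :=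
  hd1.trans_le (hd ⟨le_rfl, hi1.trans hik⟩ ⟨hi1, hik⟩ hi1)

lemma demandStep_nonneg (hd : MonotoneOn d (Set.Icc 1 k)) (hd1 : 0 < d 1) {i : ℕ}
    (hi : i ∈ Icc 1 k) : 0 ≤ demandStep d i := by
  obtain ⟨hi1, hik⟩ := mem_Icc.1 hi
  unfold demandStep
  split_ifs with h1i
  · exact sub_nonneg.2 (hd ⟨by omega, by omega⟩ ⟨hi1, hik⟩ (Nat.sub_le i 1))
  · exact sub_nonneg.2 (hd.pos_of_mem_Icc hd1 hi1 hik).le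

lemma demandStep_div_le_log {i : ℕ} (h1i : 1 < i) (hprev : 0 < d (i - 1))
    (hle : d (i - 1) ≤ d i) :
    demandStep d i / d i ≤ Real.log (d i) - Real.log (d (i - 1)) := by
  have hdi : 0 < d i := hprev.trans_le hle
  rw [← Real.log_div hdi.ne' hprev.ne', demandStep, if_pos h1i]
  calc (d i - d (i - 1)) / d i = 1 - (d i / d (i - 1))⁻¹ := by field_simp
    _ ≤ Real.log (d i / d (i - 1)) := Real.one_sub_inv_le_log_of_pos (div_pos hdi hprev)

lemma sum_demandStep_div_le (hd : MonotoneOn d (Set.Icc 1 k)) (hd1 : 0 < d 1) (hk : 1 ≤ k) :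
    ∑ i ∈ Icc 1 k, demandStep d i / d i ≤ 1 + Real.log (d k) - Real.log (d 1) := by
  induction k, hk using Nat.le_induction with
  | base => simp [demandStep, hd1.ne']
  | succ k hk ih =>
    have hd' : MonotoneOn d (Set.Icc 1 k) := hd.mono (Set.Icc_subset_Icc_right k.le_succ)
    have hprev : 0 < d k := hd'.pos_of_mem_Icc hd1 hk le_rfl
    have hle : d k ≤ d (k + 1) := hd ⟨hk, k.le_succ⟩ ⟨by omega, le_rfl⟩ k.le_succ
    have hstep := demandStep_div_le_log (d := d) (i := k + 1) (by omega) hprev hle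
    rw [sum_Icc_succ_top (by omega)]
    simp only [Nat.add_sub_cancel] at hstep
    linarith [ih hd']

lemma sum_mul_demandStep_le (hd : MonotoneOn d (Set.Icc 1 k)) (hd1 : 0 < d 1) {c : ℝ}
    (hc : ∀ i ∈ Icc 1 k, v i * d i ≤ c) :
    ∑ i ∈ Icc 1 k, v i * demandStep d i ≤ c * ∑ i ∈ Icc 1 k, demandStep d i / d i := by
  rw [mul_sum]
  refine sum_le_sum fun i hi => ?_
  obtain ⟨hi1, hik⟩ := mem_Icc.1 hi
  have hdi : 0 < d i := hd.pos_of_mem_Icc hd1 hi1 hik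
  rw [← mul_div_assoc, le_div_iff₀ hdi, mul_right_comm]
  exact mul_le_mul_of_nonneg_right (hc i hi) (demandStep_nonneg hd hd1 hi)

lemma Real.log_le_logb_two {x : ℝ} (hx : 1 ≤ x) : Real.log x ≤ Real.logb 2 x := by
  rw [Real.logb, le_div_iff₀ (Real.log_pos one_lt_two)]
  nlinarith [Real.log_two_lt_d9, Real.log_nonneg hx]

lemma one_add_log_sub_log_le {a b c : ℝ} (ha : 0 < a) (hab : a ≤ b) (hbc : b ≤ c) :
    1 + Real.log b - Real.log a ≤ 2 * (Real.logb 2 (c / a) + 1) := by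
  have hb : 0 < b := ha.trans_le hab
  have hba : 0 ≤ Real.log b - Real.log a := sub_nonneg.2 (Real.log_le_log ha hab)
  have hca : Real.log b - Real.log a ≤ Real.logb 2 (c / a) := by
    rw [← Real.log_div hb.ne' ha.ne']
    exact (Real.log_le_log (div_pos hb ha) (by gcongr)).trans
      (Real.log_le_logb_two ((one_le_div ha).2 (hab.trans hbc)))
  linarith

theorem stmt_14_general (n : ℕ) (v d : ℕ → ℝ) (h : ValidInstance n v d)
    (vstar : ℝ) (hv1 : vstar ≤ v 1)
    (hNE : IsNE n v d (vstar / 2) (vstar / 2)) :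
    welfare n v d vstar ≤ 2 * (Real.logb 2 (d n / d 1) + 1) * rev n v d vstar := by
  have hd1 : 0 < d 1 := h.2.2.2.1
  obtain ⟨k, hk, hS⟩ :=
    exists_filter_le_eq_Icc h.strictAntiOn_v.antitoneOn (one_le_two.trans h.1) hv1
  obtain ⟨hk1, hkn⟩ := mem_Icc.1 hk
  have hdemand : demand n v d vstar = d k := demand_eq_of_filter_eq_Icc hk1 hS
  have hmono : MonotoneOn d (Set.Icc 1 k) := h.monotoneOn_d.mono (Set.Icc_subset_Icc_right hkn)
  have hvalue : ∀ i ∈ Icc 1 k, v i * d i ≤ vstar * d k := fun i hi => by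
    obtain ⟨hi1, hik⟩ := mem_Icc.1 hi
    have hxi : vstar ≤ v i := by
      rw [← hS] at hi
      exact (mem_filter.1 hi).2
    exact hNE.2.2.1.value_mul_le_of_half hdemand
      (demand_value h.strictAntiOn_v (mem_Icc.2 ⟨hi1, hik.trans hkn⟩)) hxi
      (hmono ⟨hi1, hik⟩ ⟨hk1, le_rfl⟩ hik)
  have hd1k : d 1 ≤ d k := hmono ⟨le_rfl, hk1⟩ ⟨hk1, le_rfl⟩ hk1
  have hdkn : d k ≤ d n := h.monotoneOn_d ⟨hk1, hkn⟩ ⟨hk1.trans hkn, le_rfl⟩ hkn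
  have hrev : 0 ≤ vstar * d k :=
    mul_nonneg (by linarith [hNE.1]) (hd1.trans_le hd1k).le
  calc welfare n v d vstar
      ≤ vstar * d k * ∑ i ∈ Icc 1 k, demandStep d i / d i := by
        rw [welfare_eq_sum_demandStep hS]
        exact sum_mul_demandStep_le hmono hd1 hvalue
    _ ≤ vstar * d k * (1 + Real.log (d k) - Real.log (d 1)) :=
      mul_le_mul_of_nonneg_left (sum_demandStep_div_le hmono hd1 hk1) hrev
    _ ≤ vstar * d k * (2 * (Real.logb 2 (d n / d 1) + 1)) :=
      mul_le_mul_of_nonneg_left (one_add_log_sub_log_le hd1 hd1k hdkn) hrev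
    _ = 2 * (Real.logb 2 (d n / d 1) + 1) * rev n v d vstar := by rw [rev, hdemand]; ring

/-- The welfare of a symmetric equilibrium is at most `O(log D)` times its
revenue: `SW(v*) ≤ 2(log₂ D + 1)·R(v*)`. -/
theorem stmt_14 (n : ℕ) (v d : ℕ → ℝ) (h : ValidInstance n v d)
    (vstar : ℝ) (hv0 : 0 < vstar) (hv1 : vstar ≤ v 1)
    (hNE : IsNE n v d (vstar / 2) (vstar / 2)) :
    welfare n v d vstar ≤ 2 * (Real.logb 2 (d n / d 1) + 1) * rev n v d vstar :=
  stmt_14_general n v d h vstar hv1 hNE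
end
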